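/- arXiv:1608.03729 — 2 statements merged into one kernel-verified Lean document; each statement's English description precedes it below -/
import Mathlib

section
/- Halanay's inequality: Let h > 0 and let 0 < δ₁ < δ₀ be real constants. Let V : [-h, ∞) → [0, ∞) be a continuous function, differentiable on [0, ∞), satisfying V'(t) ≤ -2δ₀ V(t) + 2δ₁ sup_{θ ∈ [-h, 0]} V(t + θ) for all t ≥ 0. Then V(t) ≤ e^{-2δ t} · sup_{θ ∈ [-h, 0]} V(θ) for all t ≥ 0, where δ > 0 is the unique positive real number satisfying δ = δ₀ - δ₁ e^{2δh}. -/
/-!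
Compare `V` with `w(s) = M e^{-2δs} + ε`, where `M` bounds `V` on the initial window. At the
first time `T` where `V` reaches `w`, `V ≤ w` on `[T - h, T]` and `w` is decreasing, so the delay
term is at most `M e^{-2δ(T-h)} + ε`. The defining equation of `δ` turns the right-hand side of
the differential inequality into `w'(T) - 2(δ₀ - δ₁)ε < w'(T)`, while `V - w` attains its maximum
on `[0, T]` at `T`, forcing `V'(T) ≥ w'(T)`. Hence `V < w` for all `ε > 0`.
-/

open Set Real

theorem IsMaxOn.hasDerivWithinAt_Icc_right_nonneg {f : ℝ → ℝ} {f' a b : ℝ} (hab : a < b)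
    (hmax : IsMaxOn f (Icc a b) b) (hf : HasDerivWithinAt f f' (Icc a b) b) : 0 ≤ f' := by
  have hcone : a - b ∈ posTangentConeAt (Icc a b) b :=
    sub_mem_posTangentConeAt_of_segment_subset
      ((convex_Icc a b).segment_subset (right_mem_Icc.2 hab.le) (left_mem_Icc.2 hab.le))
  have := hmax.localize.hasFDerivWithinAt_nonpos hf.hasFDerivWithinAt hcone
  rw [ContinuousLinearMap.toSpanSingleton_apply, smul_eq_mul] at this
  exact nonneg_of_mul_nonpos_right this (sub_neg.2 hab)

theorem exists_first_zero_of_continuousOn {f : ℝ → ℝ} {a b : ℝ} (hab : a ≤ b)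
    (hf : ContinuousOn f (Icc a b)) (ha : f a < 0) (hb : 0 ≤ f b) :
    ∃ T ∈ Ioc a b, f T = 0 ∧ ∀ s ∈ Ico a T, f s < 0 := by
  have hzero_le : ∀ c ∈ Icc a b, 0 ≤ f c → ∃ z ∈ Icc a c, f z = 0 := fun c hc hfc =>
    intermediate_value_Icc hc.1 (hf.mono (Icc_subset_Icc_right hc.2)) ⟨ha.le, hfc⟩
  have hclosed : IsClosed (Icc a b ∩ f ⁻¹' {0}) :=
    hf.preimage_isClosed_of_isClosed isClosed_Icc isClosed_singleton
  obtain ⟨z, hz, hfz⟩ := hzero_le b ⟨hab, le_rfl⟩ hb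
  obtain ⟨T, ⟨hT, hfT⟩, hleast⟩ :=
    (isCompact_Icc.of_isClosed_subset hclosed inter_subset_left).exists_isLeast ⟨z, hz, hfz⟩
  refine ⟨T, ⟨lt_of_le_of_ne hT.1 ?_, hT.2⟩, hfT, fun s hs => not_le.1 fun hfs => ?_⟩
  · rintro rfl; exact ha.ne hfT
  · obtain ⟨z, hz, hfz⟩ := hzero_le s ⟨hs.1, hs.2.le.trans hT.2⟩ hfs
    have hTz : T ≤ z := hleast ⟨⟨hz.1, hz.2.trans (hs.2.le.trans hT.2)⟩, hfz⟩
    linarith [hz.2, hs.2]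

section Halanay

variable {h δ₀ δ₁ δ M ε : ℝ} {V V' : ℝ → ℝ}

theorem sSup_image_Icc_le_of_le_exp (hh : 0 ≤ h) (hδ : 0 ≤ δ) (hM : 0 ≤ M) (hε : 0 ≤ ε)
    {T : ℝ} (hT : 0 ≤ T) (hpast : ∀ s ∈ Icc (-h) 0, V s ≤ M)
    (hbefore : ∀ s ∈ Icc 0 T, V s ≤ M * exp (-2 * δ * s) + ε) :
    sSup (V '' Icc (T - h) T) ≤ M * exp (-2 * δ * (T - h)) + ε := by
  refine csSup_le ((nonempty_Icc.2 (by linarith)).image V) ?_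
  rintro _ ⟨s, hs, rfl⟩
  rcases le_or_gt s 0 with hs0 | hs0
  · have hexp : 1 ≤ exp (-2 * δ * (T - h)) := one_le_exp (by nlinarith [hs.1])
    nlinarith [hpast s ⟨by linarith [hs.1], hs0⟩]
  · have hexp : exp (-2 * δ * s) ≤ exp (-2 * δ * (T - h)) := exp_le_exp.2 (by nlinarith [hs.1])
    nlinarith [hbefore s ⟨hs0.le, hs.2⟩]

theorem halanay_lt_add (hh : 0 ≤ h) (hδ₁ : 0 ≤ δ₁) (hδ₁₀ : δ₁ < δ₀) (hδ : 0 ≤ δ)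
    (hδ_eq : δ = δ₀ - δ₁ * exp (2 * δ * h)) (hM : 0 ≤ M) (hε : 0 < ε)
    (hpast : ∀ s ∈ Icc (-h) 0, V s ≤ M) (hV_cont : ContinuousOn V (Ici (-h)))
    (hV_deriv : ∀ t, 0 ≤ t → HasDerivWithinAt V (V' t) (Ici 0) t)
    (hV_ineq : ∀ t, 0 ≤ t → V' t ≤ -2 * δ₀ * V t + 2 * δ₁ * sSup (V '' Icc (t - h) t))
    {t : ℝ} (ht : 0 ≤ t) : V t < M * exp (-2 * δ * t) + ε := by
  by_contra! hcross
  set w : ℝ → ℝ := fun s => M * exp (-2 * δ * s) + ε with hw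
  have hw_deriv : ∀ T, HasDerivAt w (-2 * δ * (M * exp (-2 * δ * T))) T := fun T => by
    simpa [hw, mul_comm, mul_left_comm, mul_assoc] using
      (((hasDerivAt_id T).const_mul (-2 * δ)).exp.const_mul M).add_const ε
  have hcont : ContinuousOn (fun s => V s - w s) (Icc 0 t) :=
    (hV_cont.mono fun s hs => mem_Ici.2 (by linarith [hs.1])).sub (by fun_prop)
  have hV0 : V 0 - w 0 < 0 := by
    simp only [hw, mul_zero, exp_zero, mul_one]; linarith [hpast 0 ⟨by linarith, le_rfl⟩]
  obtain ⟨T, hT, hVT, hbelow⟩ :=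
    exists_first_zero_of_continuousOn ht hcont hV0 (sub_nonneg.2 hcross)
  have hbefore : ∀ s ∈ Icc 0 T, V s ≤ w s := fun s hs => by
    rcases hs.2.lt_or_eq with hsT | rfl
    · linarith [hbelow s ⟨hs.1, hsT⟩]
    · linarith
  have hhist := sSup_image_Icc_le_of_le_exp hh hδ hM hε.le hT.1.le hpast hbefore
  have hderiv_nonneg : 0 ≤ V' T - -2 * δ * (M * exp (-2 * δ * T)) := by
    refine IsMaxOn.hasDerivWithinAt_Icc_right_nonneg hT.1 (fun s hs => ?_)
      (((hV_deriv T hT.1.le).sub (hw_deriv T).hasDerivWithinAt).mono Icc_subset_Ici_self)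
    show V s - w s ≤ V T - w T
    linarith [hbefore s hs]
  set E := exp (-2 * δ * T)
  have hexp : exp (-2 * δ * (T - h)) = E * exp (2 * δ * h) := by rw [← exp_add]; ring_nf
  have hrate : δ * (M * E) = δ₀ * (M * E) - δ₁ * (M * (E * exp (2 * δ * h))) := by
    linear_combination (M * E) * hδ_eq
  have hVT' : V T = M * E + ε := by simp only [hw] at hVT; linarith
  have hdelay := mul_le_mul_of_nonneg_left hhist hδ₁
  rw [hexp] at hdelay
  have hineq := hV_ineq T hT.1.le
  rw [hVT'] at hineq
  linarith [mul_lt_mul_of_pos_right hδ₁₀ hε]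

end Halanay

/-- Halanay's inequality: if `V : [-h, ∞) → [0, ∞)` is continuous, differentiable on
`[0, ∞)` with derivative `V'`, and satisfies
`V'(t) ≤ -2δ₀ V(t) + 2δ₁ sup_{θ ∈ [-h,0]} V(t+θ)` for `t ≥ 0`, then
`V(t) ≤ e^{-2δt} sup_{θ ∈ [-h,0]} V(θ)` for all `t ≥ 0`, where `δ > 0` is the unique
positive solution of `δ = δ₀ - δ₁ e^{2δh}`. -/
theorem halanay_inequality
    (h δ₀ δ₁ : ℝ) (hh : 0 < h) (hδ₁ : 0 < δ₁) (hδ : δ₁ < δ₀)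
    (V V' : ℝ → ℝ)
    (hV_nonneg : ∀ t, -h ≤ t → 0 ≤ V t)
    (hV_cont : ContinuousOn V (Set.Ici (-h)))
    (hV_deriv : ∀ t, 0 ≤ t → HasDerivWithinAt V (V' t) (Set.Ici 0) t)
    (hV_ineq : ∀ t, 0 ≤ t →
      V' t ≤ -2 * δ₀ * V t + 2 * δ₁ * sSup (V '' Set.Icc (t - h) t))
    (δ : ℝ) (hδ_pos : 0 < δ) (hδ_eq : δ = δ₀ - δ₁ * Real.exp (2 * δ * h)) :
    ∀ t, 0 ≤ t → V t ≤ Real.exp (-2 * δ * t) * sSup (V '' Set.Icc (-h) 0) := by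
  intro t ht
  set M := sSup (V '' Icc (-h) 0)
  have hbdd : BddAbove (V '' Icc (-h) 0) :=
    (isCompact_Icc.image_of_continuousOn (hV_cont.mono Icc_subset_Ici_self)).bddAbove
  have hpast : ∀ s ∈ Icc (-h) 0, V s ≤ M := fun s hs => le_csSup hbdd (mem_image_of_mem V hs)
  have hM : 0 ≤ M := (hV_nonneg 0 (by linarith)).trans (hpast 0 ⟨by linarith, le_rfl⟩)
  rw [mul_comm]
  exact le_of_forall_pos_lt_add fun ε hε =>
    halanay_lt_add hh.le hδ₁.le hδ hδ_pos.le hδ_eq hM hε hpast hV_cont hV_deriv hV_ineq ht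
end

section
/- Let a, c ∈ ℝ with a + c arbitrary. Define q : {(x, y) : 0 ≤ y ≤ x ≤ 1} → ℝ by the everywhere-convergent power series q(x, y) = -(a + c) x · Σ_{n=0}^{∞} ((a + c)(x² - y²))ⁿ / (2^{2n+1} · n! · (n+1)!). Then q satisfies: (i) ∂²q/∂x²(x, y) = ∂²q/∂y²(x, y) + (a + c) q(x, y) for all 0 ≤ y ≤ x ≤ 1; (ii) ∂q/∂y(x, 0) = 0 for all x ∈ [0, 1]; (iii) q(x, x) = -((a + c)/2) x for all x ∈ [0, 1]. -/
/-!
Put `k = a + c`, `s = k (x² - y²)` and `F(u) = ∑ uⁿ / (2^{2n+1} n! (n+1)!)`, so that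
`q(x, y) = -k x F(s)`. The coefficients of `F` are dominated by `1/n!`, so `F` is entire and may
be differentiated termwise, and the recursion `cₙ = 4 (n+1) (n+2) cₙ₊₁` says `F = 8 F' + 4 u F''`.
By the chain rule `q_xx - q_yy - k q = k² x (F(s) - 8 F'(s) - 4 s F''(s)) = 0`, while
`q_y = 2 k² x y F'(s)` vanishes at `y = 0` and `s = 0` on the diagonal, where `F(0) = 1/2`.
-/

open Nat

section PowerSum

variable {𝕜 : Type*} [RCLike 𝕜]

noncomputable def powerSum (c : ℕ → 𝕜) (u : 𝕜) : 𝕜 := ∑' n, c n * u ^ n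

def derivCoeff (c : ℕ → 𝕜) (n : ℕ) : 𝕜 := (n + 1) * c (n + 1)

variable {c : ℕ → 𝕜} {C : ℝ}

theorem powerSum_zero (c : ℕ → 𝕜) : powerSum c 0 = c 0 := by
  rw [powerSum, tsum_eq_single 0 fun n hn => by simp [hn]]
  simp

theorem summable_mul_pow_of_norm_le (hc : ∀ n, ‖c n‖ ≤ C / n !) (u : 𝕜) :
    Summable fun n => c n * u ^ n :=
  .of_norm_bounded ((Real.summable_pow_div_factorial ‖u‖).mul_left C) fun n => by
    rw [norm_mul, norm_pow, mul_div_assoc']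
    exact (mul_le_mul_of_nonneg_right (hc n) (by positivity)).trans_eq
      (div_mul_eq_mul_div _ _ _)

theorem norm_derivCoeff_le (hc : ∀ n, ‖c n‖ ≤ C / n !) (n : ℕ) :
    ‖derivCoeff c n‖ ≤ C / n ! := by
  have hn : ‖(n : 𝕜) + 1‖ = n + 1 := mod_cast RCLike.norm_natCast (K := 𝕜) (n + 1)
  calc ‖derivCoeff c n‖ ≤ (n + 1) * (C / (n + 1) !) := by
        rw [derivCoeff, norm_mul, hn]
        gcongr
        exact hc (n + 1)
    _ = C / n ! := by
        rw [factorial_succ]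
        push_cast
        field_simp

-- `n ≤ 2 ^ n` turns the termwise derivative bound into an exponential series.
theorem norm_mul_natCast_mul_pow_pred_le (hc : ∀ n, ‖c n‖ ≤ C / n !) {R : ℝ} (hR : 1 ≤ R)
    {t : 𝕜} (ht : ‖t‖ ≤ R) (n : ℕ) :
    ‖c n * (n * t ^ (n - 1))‖ ≤ C * ((2 * R) ^ n / n !) := by
  have hn : (n : ℝ) ≤ 2 ^ n := by exact_mod_cast Nat.lt_two_pow_self.le
  have ht' : ‖t‖ ^ (n - 1) ≤ R ^ n :=
    (pow_le_pow_left₀ (norm_nonneg t) ht _).trans (pow_le_pow_right₀ hR (n.sub_le 1))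
  rw [norm_mul, norm_mul, norm_pow, RCLike.norm_natCast]
  calc ‖c n‖ * (n * ‖t‖ ^ (n - 1)) ≤ C / n ! * (2 ^ n * R ^ n) :=
        mul_le_mul (hc n) (mul_le_mul hn ht' (by positivity) (by positivity)) (by positivity)
          ((norm_nonneg _).trans (hc n))
    _ = C * ((2 * R) ^ n / n !) := by ring

theorem hasDerivAt_powerSum (hc : ∀ n, ‖c n‖ ≤ C / n !) (u : 𝕜) :
    HasDerivAt (powerSum c) (powerSum (derivCoeff c) u) u := by
  obtain ⟨R, hR, huR⟩ : ∃ R, 1 ≤ R ∧ ‖u‖ < R := ⟨‖u‖ + 1, by simp, by simp⟩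
  have H := hasDerivAt_tsum_of_isPreconnected
    ((Real.summable_pow_div_factorial (2 * R)).mul_left C) Metric.isOpen_ball
    (convex_ball 0 R).isPreconnected (fun n t _ => (hasDerivAt_pow n t).const_mul (c n))
    (fun n t ht => norm_mul_natCast_mul_pow_pred_le hc hR (mem_ball_zero_iff.mp ht).le n)
    (Metric.mem_ball_self (by linarith)) (summable_mul_pow_of_norm_le hc 0)
    (mem_ball_zero_iff.mpr huR)
  suffices hsum : powerSum (derivCoeff c) u = ∑' n, c n * (n * u ^ (n - 1)) by
    rw [hsum]; exact H
  refine (HasSum.tsum_eq ((hasSum_nat_add_iff' (G := 𝕜) 1).mp ?_)).symm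
  simpa [powerSum, derivCoeff, mul_comm, mul_left_comm, mul_assoc] using
    (summable_mul_pow_of_norm_le (norm_derivCoeff_le hc) u).hasSum

theorem hasSum_natCast_mul_mul_pow {u : 𝕜} (h : Summable fun n => derivCoeff c n * u ^ n) :
    HasSum (fun n => n * c n * u ^ n) (u * powerSum (derivCoeff c) u) := by
  refine (hasSum_nat_add_iff' 1).mp ?_
  simpa [powerSum, derivCoeff, pow_succ, mul_comm, mul_left_comm, mul_assoc] using
    h.hasSum.mul_left u

end PowerSum

section Kernel

noncomputable def kernelCoeff (n : ℕ) : ℝ := (2 ^ (2 * n + 1) * n ! * (n + 1) !)⁻¹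

theorem norm_kernelCoeff_le (n : ℕ) : ‖kernelCoeff n‖ ≤ 1 / n ! := by
  have h1 : (1 : ℝ) ≤ 2 ^ (2 * n + 1) := one_le_pow₀ one_le_two
  have h2 : (1 : ℝ) ≤ (n + 1) ! := mod_cast (n + 1).factorial_pos
  rw [kernelCoeff, norm_inv, Real.norm_of_nonneg (by positivity), one_div]
  gcongr
  calc (n ! : ℝ) = 1 * n ! * 1 := by ring
    _ ≤ 2 ^ (2 * n + 1) * n ! * (n + 1) ! := by gcongr

theorem kernelCoeff_eq (n : ℕ) :
    kernelCoeff n = 4 * (n + 1) * (n + 2) * kernelCoeff (n + 1) := by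
  simp only [kernelCoeff, factorial_succ, pow_succ, mul_add]
  push_cast
  field_simp
  ring

-- Coefficientwise `4 u F'' + 8 F' = F`: the Bessel equation satisfied by `I₁(√u)/√u`.
theorem powerSum_kernelCoeff_eq (u : ℝ) :
    powerSum kernelCoeff u = 8 * powerSum (derivCoeff kernelCoeff) u +
      4 * u * powerSum (derivCoeff (derivCoeff kernelCoeff)) u := by
  have hb := norm_derivCoeff_le norm_kernelCoeff_le
  have H := ((summable_mul_pow_of_norm_le hb u).hasSum.mul_left 8).add
    ((hasSum_natCast_mul_mul_pow
      (summable_mul_pow_of_norm_le (norm_derivCoeff_le hb) u)).mul_left 4)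
  rw [mul_assoc 4]
  refine (tsum_congr fun n => ?_).trans H.tsum_eq
  rw [kernelCoeff_eq, derivCoeff]
  ring

theorem powerSum_kernelCoeff_zero : powerSum kernelCoeff 0 = 1 / 2 := by
  simp [powerSum_zero, kernelCoeff]

end Kernel

section KernelPDE

variable {F F' F'' : ℝ → ℝ} (k : ℝ)

theorem hasDerivAt_comp_mul_sq_sub_sq_left (hF : ∀ u, HasDerivAt F (F' u) u) (x y : ℝ) :
    HasDerivAt (fun t => F (k * (t ^ 2 - y ^ 2))) (2 * k * x * F' (k * (x ^ 2 - y ^ 2))) x :=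
  ((hF _).comp x (((hasDerivAt_pow 2 x).sub_const (y ^ 2)).const_mul k)).congr_deriv (by ring)

theorem hasDerivAt_comp_mul_sq_sub_sq_right (hF : ∀ u, HasDerivAt F (F' u) u) (x y : ℝ) :
    HasDerivAt (fun t => F (k * (x ^ 2 - t ^ 2))) (-(2 * k * y) * F' (k * (x ^ 2 - y ^ 2))) y :=
  ((hF _).comp y (((hasDerivAt_pow 2 y).const_sub (x ^ 2)).const_mul k)).congr_deriv (by ring)

theorem hasDerivAt_kernel_dx (hF : ∀ u, HasDerivAt F (F' u) u) (x y : ℝ) :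
    HasDerivAt (fun t => -k * t * F (k * (t ^ 2 - y ^ 2)))
      (-k * F (k * (x ^ 2 - y ^ 2)) - 2 * k ^ 2 * x ^ 2 * F' (k * (x ^ 2 - y ^ 2))) x :=
  (((hasDerivAt_id' x).const_mul (-k)).mul
    (hasDerivAt_comp_mul_sq_sub_sq_left k hF x y)).congr_deriv (by ring)

theorem hasDerivAt_kernel_dxx (hF : ∀ u, HasDerivAt F (F' u) u)
    (hF' : ∀ u, HasDerivAt F' (F'' u) u) (x y : ℝ) :
    HasDerivAt
      (fun t => -k * F (k * (t ^ 2 - y ^ 2)) - 2 * k ^ 2 * t ^ 2 * F' (k * (t ^ 2 - y ^ 2)))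
      (-6 * k ^ 2 * x * F' (k * (x ^ 2 - y ^ 2)) - 4 * k ^ 3 * x ^ 3 * F'' (k * (x ^ 2 - y ^ 2)))
      x :=
  ((hasDerivAt_comp_mul_sq_sub_sq_left k hF x y).const_mul (-k) |>.sub
    (((hasDerivAt_pow 2 x).const_mul (2 * k ^ 2)).mul
      (hasDerivAt_comp_mul_sq_sub_sq_left k hF' x y))).congr_deriv (by ring)

theorem hasDerivAt_kernel_dy (hF : ∀ u, HasDerivAt F (F' u) u) (x y : ℝ) :
    HasDerivAt (fun t => -k * x * F (k * (x ^ 2 - t ^ 2)))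
      (2 * k ^ 2 * x * y * F' (k * (x ^ 2 - y ^ 2))) y :=
  ((hasDerivAt_comp_mul_sq_sub_sq_right k hF x y).const_mul (-k * x)).congr_deriv (by ring)

theorem hasDerivAt_kernel_dyy (hF' : ∀ u, HasDerivAt F' (F'' u) u) (x y : ℝ) :
    HasDerivAt (fun t => 2 * k ^ 2 * x * t * F' (k * (x ^ 2 - t ^ 2)))
      (2 * k ^ 2 * x * F' (k * (x ^ 2 - y ^ 2)) - 4 * k ^ 3 * x * y ^ 2 * F'' (k * (x ^ 2 - y ^ 2)))
      y :=
  (((hasDerivAt_id' y).const_mul (2 * k ^ 2 * x)).mul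
    (hasDerivAt_comp_mul_sq_sub_sq_right k hF' x y)).congr_deriv (by ring)

end KernelPDE

/-- The backstepping kernel
`q(x,y) = -(a+c)x Σₙ ((a+c)(x²-y²))ⁿ / (2^{2n+1} n! (n+1)!)`
(the Bessel-series form of `-(a+c)x I₁(√((a+c)(x²-y²)))/√((a+c)(x²-y²))`) satisfies
`q_{xx} = q_{yy} + (a+c)q` on the triangle `0 ≤ y ≤ x ≤ 1`, `q_y(x,0) = 0`, and
`q(x,x) = -((a+c)/2)x`. -/
theorem kernel_q_pde
    (a c : ℝ) (q : ℝ → ℝ → ℝ)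
    (hq : q = fun x y => -(a + c) * x *
      ∑' n : ℕ, ((a + c) * (x ^ 2 - y ^ 2)) ^ n /
        (2 ^ (2 * n + 1) * (n.factorial : ℝ) * ((n + 1).factorial : ℝ))) :
    ∃ qx qxx qy qyy : ℝ → ℝ → ℝ,
      (∀ x y, HasDerivAt (fun t => q t y) (qx x y) x) ∧
      (∀ x y, HasDerivAt (fun t => qx t y) (qxx x y) x) ∧
      (∀ x y, HasDerivAt (fun s => q x s) (qy x y) y) ∧
      (∀ x y, HasDerivAt (fun s => qy x s) (qyy x y) y) ∧
      (∀ x y, 0 ≤ y → y ≤ x → x ≤ 1 → qxx x y = qyy x y + (a + c) * q x y) ∧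
      (∀ x, 0 ≤ x → x ≤ 1 → qy x 0 = 0) ∧
      (∀ x, 0 ≤ x → x ≤ 1 → q x x = -((a + c) / 2) * x) := by
  set k := a + c
  replace hq : q = fun x y => -k * x * powerSum kernelCoeff (k * (x ^ 2 - y ^ 2)) := by
    simpa only [powerSum, kernelCoeff, div_eq_inv_mul] using hq
  subst hq
  have hF := hasDerivAt_powerSum norm_kernelCoeff_le
  have hF' := hasDerivAt_powerSum (norm_derivCoeff_le norm_kernelCoeff_le)
  refine ⟨_, _, _, _, hasDerivAt_kernel_dx k hF, hasDerivAt_kernel_dxx k hF hF',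
    hasDerivAt_kernel_dy k hF, hasDerivAt_kernel_dyy k hF', fun x y _ _ _ => ?_,
    fun x _ _ => by ring, fun x _ _ => ?_⟩
  · dsimp only
    rw [powerSum_kernelCoeff_eq]
    ring
  · dsimp only
    rw [sub_self, mul_zero, powerSum_kernelCoeff_zero]
    ring
end
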